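/- arXiv:1507.00861 — 2 statements merged into one kernel-verified Lean document; each statement's English description precedes it below -/
import Mathlib

section
/- Let X be a pointed metric space and F a Banach space. If T_n : X → F are Lipschitz nuclear operators with Σ_{n=1}^∞ N(T_n) < ∞ (where N denotes the Lipschitz nuclear norm), then the series T = Σ_{n=1}^∞ T_n converges to a Lipschitz nuclear operator T : X → F with N(T) ≤ Σ_{n=1}^∞ N(T_n). Consequently, the space of Lipschitz nuclear operators from X to F with the norm N is a Banach space. -/
open scoped NNReal

/-- The Lipschitz constant of a map between (pseudo)metric spaces. -/
noncomputable def lipConst {X Y : Type*} [PseudoMetricSpace X] [PseudoMetricSpace Y]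
    (f : X → Y) : ℝ≥0 := sInf {K | LipschitzWith K f}

/-- `T` is Lipschitz nuclear: `T x = ∑' j, g j x • e j` with `g j ∈ X^#` and
`∑ Lip(g j) ‖e j‖ < ∞`. -/
def IsLipNuclear {X F : Type*} [MetricSpace X] [Zero X]
    [NormedAddCommGroup F] [NormedSpace ℝ F] (T : X → F) : Prop :=
  ∃ (g : ℕ → X → ℝ) (e : ℕ → F),
    (∀ j, LipschitzWith (lipConst (g j)) (g j)) ∧ (∀ j, g j 0 = 0) ∧
    (Summable fun j => (lipConst (g j) : ℝ) * ‖e j‖) ∧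
    ∀ x, HasSum (fun j => g j x • e j) (T x)

/-- The Lipschitz nuclear norm: infimum of `∑ Lip(g j) ‖e j‖` over all nuclear
representations. -/
noncomputable def nuclearNorm {X F : Type*} [MetricSpace X] [Zero X]
    [NormedAddCommGroup F] [NormedSpace ℝ F] (T : X → F) : ℝ :=
  sInf {c | ∃ (g : ℕ → X → ℝ) (e : ℕ → F),
    (∀ j, LipschitzWith (lipConst (g j)) (g j)) ∧ (∀ j, g j 0 = 0) ∧
    (∀ x, HasSum (fun j => g j x • e j) (T x)) ∧
    HasSum (fun j => (lipConst (g j) : ℝ) * ‖e j‖) c}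

/-!
Choose for each `T n` a representation `∑ⱼ G n j ⊠ E n j` whose cost `c n` exceeds `N(T n)` by
at most `ε / 2ⁿ⁺¹`. Since all costs are nonnegative, the doubly indexed family
`Lip(G n j) ‖E n j‖` is summable with sum `∑ c n`, and `|G n j x| ≤ Lip(G n j) d(x, 0)` makes
`G n j x • E n j` absolutely summable in the Banach space `F`; summing over `j` first shows that
the concatenated family, reindexed along `ℕ ≃ ℕ × ℕ`, represents `∑ T n` at cost
`≤ ∑ N(T n) + ε`.
-/

section LipNuclear

variable {X F : Type*} [MetricSpace X] [Zero X] [NormedAddCommGroup F] [NormedSpace ℝ F]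
  {ι κ β : Type*}

theorem LipschitzWith.abs_le_mul_dist_zero {g : X → ℝ} {K : ℝ≥0} (hg : LipschitzWith K g)
    (h0 : g 0 = 0) (x : X) : |g x| ≤ K * dist x 0 := by
  simpa [h0, Real.dist_eq] using hg.dist_le_mul x 0

theorem summable_smul_of_summable_lipschitz_mul_norm [CompleteSpace F] {g : ι → X → ℝ}
    {e : ι → F} {K : ι → ℝ≥0} (hg : ∀ j, LipschitzWith (K j) (g j)) (h0 : ∀ j, g j 0 = 0)
    (hK : Summable fun j => (K j : ℝ) * ‖e j‖) (x : X) :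
    Summable fun j => g j x • e j := by
  refine Summable.of_norm_bounded (hK.mul_right (dist x 0)) fun j => ?_
  calc ‖g j x • e j‖ = |g j x| * ‖e j‖ := by rw [norm_smul, Real.norm_eq_abs]
    _ ≤ K j * dist x 0 * ‖e j‖ := by
      gcongr
      exact (hg j).abs_le_mul_dist_zero (h0 j) x
    _ = K j * ‖e j‖ * dist x 0 := by ring

structure IsNuclearRep (T : X → F) (g : ι → X → ℝ) (e : ι → F) (c : ℝ) : Prop where
  lipschitzWith : ∀ j, LipschitzWith (lipConst (g j)) (g j)
  map_zero : ∀ j, g j 0 = 0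
  hasSum_apply : ∀ x, HasSum (fun j => g j x • e j) (T x)
  hasSum_cost : HasSum (fun j => (lipConst (g j) : ℝ) * ‖e j‖) c

namespace IsNuclearRep

section Single

variable {T : X → F} {g : ι → X → ℝ} {e : ι → F} {c : ℝ}

theorem comp_equiv (h : IsNuclearRep T g e c) (k : κ ≃ ι) :
    IsNuclearRep T (fun j => g (k j)) (fun j => e (k j)) c where
  lipschitzWith j := h.lipschitzWith (k j)
  map_zero j := h.map_zero (k j)
  hasSum_apply x := k.hasSum_iff.2 (h.hasSum_apply x)
  hasSum_cost := k.hasSum_iff.2 h.hasSum_cost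

theorem isLipNuclear {g : ℕ → X → ℝ} {e : ℕ → F} (h : IsNuclearRep T g e c) :
    IsLipNuclear T :=
  ⟨g, e, h.lipschitzWith, h.map_zero, h.hasSum_cost.summable, h.hasSum_apply⟩

theorem nuclearNorm_le {g : ℕ → X → ℝ} {e : ℕ → F} (h : IsNuclearRep T g e c) :
    nuclearNorm T ≤ c := by
  refine csInf_le ⟨0, ?_⟩ ⟨g, e, h.lipschitzWith, h.map_zero, h.hasSum_apply, h.hasSum_cost⟩
  rintro _ ⟨g', e', -, -, -, hcost⟩
  exact hcost.nonneg fun j => by positivity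

end Single

section Family

variable {T : β → X → F} {G : β → ι → X → ℝ} {E : β → ι → F} {c : β → ℝ}

theorem hasSum_cost_prod (h : ∀ n, IsNuclearRep (T n) (G n) (E n) (c n)) (hc : Summable c) :
    HasSum (fun p : β × ι => (lipConst (G p.1 p.2) : ℝ) * ‖E p.1 p.2‖) (∑' n, c n) := by
  have hnonneg : ∀ p : β × ι, 0 ≤ (lipConst (G p.1 p.2) : ℝ) * ‖E p.1 p.2‖ :=
    fun _ => by positivity
  have hsummable : Summable fun p : β × ι => (lipConst (G p.1 p.2) : ℝ) * ‖E p.1 p.2‖ := by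
    refine (summable_prod_of_nonneg hnonneg).2 ⟨fun n => (h n).hasSum_cost.summable, ?_⟩
    simpa only [fun n => (h n).hasSum_cost.tsum_eq] using hc
  rw [(hsummable.hasSum.prod_fiberwise fun n => (h n).hasSum_cost).tsum_eq]
  exact hsummable.hasSum

variable [CompleteSpace F]

theorem summable_apply_prod (h : ∀ n, IsNuclearRep (T n) (G n) (E n) (c n)) (hc : Summable c)
    (x : X) : Summable fun p : β × ι => G p.1 p.2 x • E p.1 p.2 :=
  summable_smul_of_summable_lipschitz_mul_norm (fun p : β × ι => (h p.1).lipschitzWith p.2)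
    (fun p : β × ι => (h p.1).map_zero p.2) (hasSum_cost_prod h hc).summable x

theorem hasSum_apply_prod (h : ∀ n, IsNuclearRep (T n) (G n) (E n) (c n)) (hc : Summable c)
    (x : X) : HasSum (fun n => T n x) (∑' p : β × ι, G p.1 p.2 x • E p.1 p.2) :=
  (summable_apply_prod h hc x).hasSum.prod_fiberwise fun n => (h n).hasSum_apply x

theorem tsum (h : ∀ n, IsNuclearRep (T n) (G n) (E n) (c n)) (hc : Summable c) :
    IsNuclearRep (fun x => ∑' n, T n x) (fun p : β × ι => G p.1 p.2) (fun p => E p.1 p.2)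
      (∑' n, c n) where
  lipschitzWith p := (h p.1).lipschitzWith p.2
  map_zero p := (h p.1).map_zero p.2
  hasSum_apply x := by
    rw [(hasSum_apply_prod h hc x).tsum_eq]
    exact (summable_apply_prod h hc x).hasSum
  hasSum_cost := hasSum_cost_prod h hc

end Family

end IsNuclearRep

theorem IsLipNuclear.exists_isNuclearRep_lt {T : X → F} (hT : IsLipNuclear T) {ε : ℝ}
    (hε : 0 < ε) : ∃ (g : ℕ → X → ℝ) (e : ℕ → F) (c : ℝ),
      IsNuclearRep T g e c ∧ c < nuclearNorm T + ε := by
  obtain ⟨g, e, hg, h0, hsum, hT⟩ := hT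
  obtain ⟨c, ⟨g, e, hg, h0, hT, hcost⟩, hlt⟩ :=
    exists_lt_of_csInf_lt (by exact ⟨_, g, e, hg, h0, hT, hsum.hasSum⟩)
      (lt_add_of_pos_right (nuclearNorm T) hε)
  exact ⟨g, e, c, ⟨hg, h0, hT, hcost⟩, hlt⟩

variable {T : ℕ → X → F}

theorem exists_isNuclearReps_tsum_cost_le (hT : ∀ n, IsLipNuclear (T n))
    (hsum : Summable fun n => nuclearNorm (T n)) {ε : ℝ} (hε : 0 < ε) :
    ∃ (G : ℕ → ℕ → X → ℝ) (E : ℕ → ℕ → F) (c : ℕ → ℝ),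
      (∀ n, IsNuclearRep (T n) (G n) (E n) (c n)) ∧ Summable c ∧
        ∑' n, c n ≤ ∑' n, nuclearNorm (T n) + ε := by
  have hε' (n : ℕ) : 0 < ε / 2 / 2 ^ n := by positivity
  choose G E c hrep hlt using fun n => (hT n).exists_isNuclearRep_lt (hε' n)
  have hbound := hsum.add (summable_geometric_two' ε)
  have hc : Summable c :=
    hbound.of_nonneg_of_le (fun n => (hrep n).hasSum_cost.nonneg fun j => by positivity)
      fun n => (hlt n).le
  refine ⟨G, E, c, hrep, hc, ?_⟩
  calc ∑' n, c n ≤ ∑' n, (nuclearNorm (T n) + ε / 2 / 2 ^ n) :=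
        hc.tsum_le_tsum (fun n => (hlt n).le) hbound
    _ = ∑' n, nuclearNorm (T n) + ε := by
        rw [hsum.tsum_add (summable_geometric_two' ε), tsum_geometric_two']

variable [CompleteSpace F]

theorem summable_apply_of_summable_nuclearNorm (hT : ∀ n, IsLipNuclear (T n))
    (hsum : Summable fun n => nuclearNorm (T n)) (x : X) : Summable fun n => T n x := by
  obtain ⟨G, E, c, hrep, hc, -⟩ := exists_isNuclearReps_tsum_cost_le hT hsum one_pos
  exact (IsNuclearRep.hasSum_apply_prod hrep hc x).summable

theorem exists_isNuclearRep_tsum_le (hT : ∀ n, IsLipNuclear (T n))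
    (hsum : Summable fun n => nuclearNorm (T n)) {ε : ℝ} (hε : 0 < ε) :
    ∃ (g : ℕ → X → ℝ) (e : ℕ → F) (c : ℝ),
      IsNuclearRep (fun x => ∑' n, T n x) g e c ∧ c ≤ ∑' n, nuclearNorm (T n) + ε := by
  obtain ⟨G, E, c, hrep, hc, hle⟩ := exists_isNuclearReps_tsum_cost_le hT hsum hε
  exact ⟨_, _, _, (IsNuclearRep.tsum hrep hc).comp_equiv (Denumerable.eqv (ℕ × ℕ)).symm, hle⟩

end LipNuclear

theorem stmt13 {X F : Type*} [MetricSpace X] [Zero X]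
    [NormedAddCommGroup F] [NormedSpace ℝ F] [CompleteSpace F]
    (T : ℕ → X → F) (hT : ∀ n, IsLipNuclear (T n))
    (hsum : Summable fun n => nuclearNorm (T n)) :
    (∀ x, Summable fun n => T n x) ∧
    IsLipNuclear (fun x => ∑' n, T n x) ∧
    nuclearNorm (fun x => ∑' n, T n x) ≤ ∑' n, nuclearNorm (T n) := by
  refine ⟨summable_apply_of_summable_nuclearNorm hT hsum, ?_, ?_⟩
  · obtain ⟨g, e, c, hrep, -⟩ := exists_isNuclearRep_tsum_le hT hsum one_pos
    exact hrep.isLipNuclear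
  · refine le_of_forall_pos_le_add fun ε hε => ?_
    obtain ⟨g, e, c, hrep, hle⟩ := exists_isNuclearRep_tsum_le hT hsum hε
    exact hrep.nuclearNorm_le.trans hle
end

section
/- Let X be a pointed metric space and F a Banach space. Define the Lipschitz Hilbert norm of a base-point-preserving Lipschitz map T : X → F as H(T) = inf ‖B‖·Lip(A), the infimum over all factorizations T = B ∘ A where H is a Hilbert space, A : X → H is base-point-preserving Lipschitz, and B : H → F is bounded linear. If T₁, T₂ : X → F both admit such Hilbert-space factorizations, then so does T₁ + T₂, and H(T₁ + T₂) ≤ H(T₁) + H(T₂). (The factorization of T₁+T₂ goes through the Hilbert space ℓ²-direct sum H₁ ⊕ H₂.) -/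
open scoped NNReal

/-- A factorization `T = B ∘ A` through a (real) Hilbert space, with `A` base-point-preserving
Lipschitz and `B` bounded linear. -/
structure HilbertFactorization {X F : Type*} [MetricSpace X] [Zero X]
    [NormedAddCommGroup F] [NormedSpace ℝ F] (T : X → F) where
  H : Type
  [nacg : NormedAddCommGroup H]
  [ips : InnerProductSpace ℝ H]
  [cs : CompleteSpace H]
  A : X → H
  B : H →L[ℝ] F
  lipA : ℝ≥0
  hA : LipschitzWith lipA A
  hA0 : A 0 = 0
  fact : ∀ x, T x = B (A x)

attribute [instance] HilbertFactorization.nacg HilbertFactorization.ips HilbertFactorization.cs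

/-- The Lipschitz Hilbert norm `H(T) = inf ‖B‖ · Lip(A)` over all Hilbert space
factorizations. -/
noncomputable def hilbNorm {X F : Type*} [MetricSpace X] [Zero X]
    [NormedAddCommGroup F] [NormedSpace ℝ F] (T : X → F) : ℝ :=
  sInf {c | ∃ f : HilbertFactorization T, c = ‖f.B‖ * (f.lipA : ℝ)}

/-!
Rescaling a factorization to `(t • A, t⁻¹ • B)` does not change `‖B‖ * Lip(A)`, and a suitable
`t` makes `(‖B‖² + Lip(A)²) / 2` as close to `‖B‖ * Lip(A)` as we like. Through `H₁ ⊕₂ H₂` one has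
`‖B‖² ≤ ‖B₁‖² + ‖B₂‖²` and `Lip(A)² ≤ Lip(A₁)² + Lip(A₂)²`, so by AM-GM
`‖B‖ * Lip(A) ≤ Σᵢ (‖Bᵢ‖² + Lip(Aᵢ)²) / 2`; for balanced near-optimal factorizations `fᵢ` of `Tᵢ`
this is at most `H(T₁) + H(T₂) + δ`.
-/

lemma mul_add_mul_le_sqrt_mul_sqrt (a b c d : ℝ) :
    a * c + b * d ≤ √(a ^ 2 + b ^ 2) * √(c ^ 2 + d ^ 2) := by
  rw [← Real.sqrt_mul (by positivity)]
  apply Real.le_sqrt_of_sq_le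
  nlinarith [sq_nonneg (a * d - b * c)]

lemma sqrt_mul_sqrt_le_add_div_two {P Q : ℝ} (hP : 0 ≤ P) (hQ : 0 ≤ Q) :
    √P * √Q ≤ (P + Q) / 2 := by
  nlinarith [two_mul_le_add_sq √P √Q, Real.sq_sqrt hP, Real.sq_sqrt hQ]

lemma exists_pos_div_sq_add_mul_sq_lt {a b δ : ℝ} (ha : 0 ≤ a) (hb : 0 ≤ b) (hδ : 0 < δ) :
    ∃ t > 0, (b / t) ^ 2 + (t * a) ^ 2 < 2 * (a * b) + δ := by
  set ε := δ / (a + b + 1)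
  have hε : 0 < ε := by positivity
  -- `t² = (b + ε) / (a + ε)` is the balancing choice `t² = b / a`, perturbed so that `a` or `b`
  -- may vanish.
  have hb' : 0 < b + ε := by positivity
  have ha' : 0 < a + ε := by positivity
  refine ⟨√((b + ε) / (a + ε)), by positivity, ?_⟩
  rw [div_pow, mul_pow, Real.sq_sqrt (by positivity)]
  have h₁ : b ^ 2 / ((b + ε) / (a + ε)) ≤ b * (a + ε) := by
    rw [div_div_eq_mul_div, div_le_iff₀ hb']
    nlinarith [mul_nonneg hb ha'.le]
  have h₂ : (b + ε) / (a + ε) * a ^ 2 ≤ a * (b + ε) := by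
    rw [div_mul_eq_mul_div, div_le_iff₀ ha']
    nlinarith [mul_nonneg ha hb'.le]
  have hεδ : ε * (a + b) < δ := by
    rw [div_mul_eq_mul_div, div_lt_iff₀ (by positivity)]
    nlinarith
  nlinarith

lemma LipschitzWith.toLp_prod {α β γ : Type*} [PseudoMetricSpace α]
    [SeminormedAddCommGroup β] [SeminormedAddCommGroup γ] {K₁ K₂ : ℝ≥0} {f : α → β} {g : α → γ}
    (hf : LipschitzWith K₁ f) (hg : LipschitzWith K₂ g) :
    LipschitzWith (NNReal.sqrt (K₁ ^ 2 + K₂ ^ 2)) fun x => WithLp.toLp 2 (f x, g x) := by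
  refine LipschitzWith.of_dist_le_mul fun x y => ?_
  rw [WithLp.prod_dist_eq_of_L2, Real.coe_sqrt, ← Real.sqrt_sq (dist_nonneg (x := x)),
    ← Real.sqrt_mul (by positivity)]
  apply Real.sqrt_le_sqrt
  simp only [WithLp.toLp_fst, WithLp.toLp_snd, NNReal.coe_add, NNReal.coe_pow]
  nlinarith [pow_le_pow_left₀ dist_nonneg (hf.dist_le_mul x y) 2,
    pow_le_pow_left₀ dist_nonneg (hg.dist_le_mul x y) 2]

lemma ContinuousLinearMap.norm_coprod_comp_prodL2_le {𝕜 E₁ E₂ F : Type*}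
    [NontriviallyNormedField 𝕜] [SeminormedAddCommGroup E₁] [SeminormedAddCommGroup E₂]
    [SeminormedAddCommGroup F] [NormedSpace 𝕜 E₁] [NormedSpace 𝕜 E₂] [NormedSpace 𝕜 F]
    (f : E₁ →L[𝕜] F) (g : E₂ →L[𝕜] F) :
    ‖(f.coprod g).comp (WithLp.prodContinuousLinearEquiv 2 𝕜 E₁ E₂).toContinuousLinearMap‖
      ≤ √(‖f‖ ^ 2 + ‖g‖ ^ 2) := by
  refine opNorm_le_bound _ (by positivity) fun v => ?_
  rw [WithLp.prod_norm_eq_of_L2]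
  calc ‖f v.fst + g v.snd‖ ≤ ‖f‖ * ‖v.fst‖ + ‖g‖ * ‖v.snd‖ :=
        (norm_add_le _ _).trans (add_le_add (f.le_opNorm _) (g.le_opNorm _))
    _ ≤ _ := mul_add_mul_le_sqrt_mul_sqrt ..

namespace HilbertFactorization

variable {X F : Type*} [MetricSpace X] [Zero X] [NormedAddCommGroup F] [NormedSpace ℝ F]
  {T T₁ T₂ : X → F}

noncomputable def rescale (f : HilbertFactorization T) (t : ℝ) (ht : t ≠ 0) :
    HilbertFactorization T where
  H := f.H
  A x := t • f.A x
  B := t⁻¹ • f.B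
  lipA := ‖t‖₊ * f.lipA
  hA := (lipschitzWith_smul t).comp f.hA
  hA0 := by simp [f.hA0]
  fact x := by simp [f.fact x, smul_smul, ht]

lemma norm_rescale_B (f : HilbertFactorization T) (t : ℝ) (ht : t ≠ 0) :
    ‖(f.rescale t ht).B‖ = ‖f.B‖ / |t| := by
  rw [rescale, norm_smul, norm_inv, Real.norm_eq_abs, inv_mul_eq_div]

lemma lipA_rescale (f : HilbertFactorization T) (t : ℝ) (ht : t ≠ 0) :
    ((f.rescale t ht).lipA : ℝ) = |t| * f.lipA := by
  simp [rescale]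

noncomputable def add (f₁ : HilbertFactorization T₁) (f₂ : HilbertFactorization T₂) :
    HilbertFactorization fun x => T₁ x + T₂ x where
  H := WithLp 2 (f₁.H × f₂.H)
  A x := WithLp.toLp 2 (f₁.A x, f₂.A x)
  B := (f₁.B.coprod f₂.B).comp
    (WithLp.prodContinuousLinearEquiv 2 ℝ f₁.H f₂.H).toContinuousLinearMap
  lipA := NNReal.sqrt (f₁.lipA ^ 2 + f₂.lipA ^ 2)
  hA := f₁.hA.toLp_prod f₂.hA
  hA0 := by simp [f₁.hA0, f₂.hA0]
  fact x := by simp [f₁.fact x, f₂.fact x]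

lemma norm_B_mul_lipA_add_le (f₁ : HilbertFactorization T₁) (f₂ : HilbertFactorization T₂) :
    ‖(f₁.add f₂).B‖ * (f₁.add f₂).lipA
      ≤ ((‖f₁.B‖ ^ 2 + f₁.lipA ^ 2) + (‖f₂.B‖ ^ 2 + f₂.lipA ^ 2)) / 2 := by
  have hlip : ((f₁.add f₂).lipA : ℝ) = √((f₁.lipA : ℝ) ^ 2 + f₂.lipA ^ 2) := by
    simp [add]
  calc ‖(f₁.add f₂).B‖ * (f₁.add f₂).lipA
      ≤ √(‖f₁.B‖ ^ 2 + ‖f₂.B‖ ^ 2) * √((f₁.lipA : ℝ) ^ 2 + f₂.lipA ^ 2) := by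
        rw [hlip]
        gcongr
        exact ContinuousLinearMap.norm_coprod_comp_prodL2_le _ _
    _ ≤ _ := by
        have := sqrt_mul_sqrt_le_add_div_two (P := ‖f₁.B‖ ^ 2 + ‖f₂.B‖ ^ 2)
          (Q := (f₁.lipA : ℝ) ^ 2 + f₂.lipA ^ 2) (by positivity) (by positivity)
        linarith

lemma exists_sq_add_sq_lt (f : HilbertFactorization T) {δ : ℝ} (hδ : 0 < δ) :
    ∃ g : HilbertFactorization T, ‖g.B‖ ^ 2 + (g.lipA : ℝ) ^ 2 < 2 * (‖f.B‖ * f.lipA) + δ := by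
  obtain ⟨t, ht, hlt⟩ := exists_pos_div_sq_add_mul_sq_lt f.lipA.coe_nonneg (norm_nonneg f.B) hδ
  refine ⟨f.rescale t ht.ne', ?_⟩
  rw [norm_rescale_B, lipA_rescale, abs_of_pos ht]
  linarith

end HilbertFactorization

lemma hilbNorm_le {X F : Type*} [MetricSpace X] [Zero X] [NormedAddCommGroup F]
    [NormedSpace ℝ F] {T : X → F} (f : HilbertFactorization T) :
    hilbNorm T ≤ ‖f.B‖ * f.lipA :=
  csInf_le ⟨0, by rintro c ⟨g, rfl⟩; positivity⟩ ⟨f, rfl⟩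

lemma exists_sq_add_sq_lt_hilbNorm {X F : Type*} [MetricSpace X] [Zero X]
    [NormedAddCommGroup F] [NormedSpace ℝ F] {T : X → F} (h : Nonempty (HilbertFactorization T))
    {δ : ℝ} (hδ : 0 < δ) :
    ∃ g : HilbertFactorization T, ‖g.B‖ ^ 2 + (g.lipA : ℝ) ^ 2 < 2 * hilbNorm T + δ := by
  obtain ⟨f₀⟩ := h
  obtain ⟨_, ⟨f, rfl⟩, hf⟩ := Real.lt_sInf_add_pos
    (s := {c | ∃ f : HilbertFactorization T, c = ‖f.B‖ * (f.lipA : ℝ)}) ⟨_, f₀, rfl⟩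
    (by positivity : 0 < δ / 4)
  obtain ⟨g, hg⟩ := f.exists_sq_add_sq_lt (half_pos hδ)
  refine ⟨g, ?_⟩
  unfold hilbNorm
  linarith

theorem stmt14_general {X F : Type*} [MetricSpace X] [Zero X]
    [NormedAddCommGroup F] [NormedSpace ℝ F]
    (T₁ T₂ : X → F)
    (h₁ : Nonempty (HilbertFactorization T₁)) (h₂ : Nonempty (HilbertFactorization T₂)) :
    Nonempty (HilbertFactorization fun x => T₁ x + T₂ x) ∧
      hilbNorm (fun x => T₁ x + T₂ x) ≤ hilbNorm T₁ + hilbNorm T₂ := by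
  refine ⟨h₁.elim fun f₁ => h₂.elim fun f₂ => ⟨f₁.add f₂⟩,
    le_of_forall_pos_lt_add fun δ hδ => ?_⟩
  obtain ⟨g₁, hg₁⟩ := exists_sq_add_sq_lt_hilbNorm h₁ hδ
  obtain ⟨g₂, hg₂⟩ := exists_sq_add_sq_lt_hilbNorm h₂ hδ
  calc hilbNorm (fun x => T₁ x + T₂ x) ≤ ‖(g₁.add g₂).B‖ * (g₁.add g₂).lipA := hilbNorm_le _
    _ ≤ ((‖g₁.B‖ ^ 2 + g₁.lipA ^ 2) + (‖g₂.B‖ ^ 2 + g₂.lipA ^ 2)) / 2 :=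
        g₁.norm_B_mul_lipA_add_le g₂
    _ < hilbNorm T₁ + hilbNorm T₂ + δ := by linarith

theorem stmt14 {X F : Type*} [MetricSpace X] [Zero X]
    [NormedAddCommGroup F] [NormedSpace ℝ F] [CompleteSpace F]
    (T₁ T₂ : X → F) (hT₁0 : T₁ 0 = 0) (hT₂0 : T₂ 0 = 0)
    (h₁ : Nonempty (HilbertFactorization T₁)) (h₂ : Nonempty (HilbertFactorization T₂)) :
    Nonempty (HilbertFactorization fun x => T₁ x + T₂ x) ∧
      hilbNorm (fun x => T₁ x + T₂ x) ≤ hilbNorm T₁ + hilbNorm T₂ :=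
  stmt14_general T₁ T₂ h₁ h₂
end
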